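/- arXiv:2209.09886 — 6 statements merged into one kernel-verified Lean document; each statement's English description precedes it below -/
import Mathlib

section
/- For every exponent p ∈ (1, ∞), every real number γ < (p-1)/p, and every integer k ≥ 1, there exists a constant C = C(k, p, γ) > 0 such that for every function f : [0, ∞) → ℝ that is k times continuously differentiable and satisfies f(0) = f'(0) = ⋯ = f^(k-1)(0) = 0, one has (∫₀^∞ |x^(γ-k) f(x)|^p dx)^(1/p) ≤ C · (∫₀^∞ |x^γ f^(k)(x)|^p dx)^(1/p). -/
/-!
For `k = 1` this is Hardy's inequality. Since `g 0 = 0`, `|g x| ≤ ∫₀ˣ |g'|`, and Hölder's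
inequality with the weight `t ^ β`, for some `β ∈ (γ, (p - 1) / p)`, gives
`(∫₀ˣ |g'|) ^ p ≲ x ^ (p - 1 - β p) ∫₀ˣ t ^ (β p) |g'(t)| ^ p dt`. After exchanging the order of
integration, the remaining integral `∫ₜ^∞ x ^ ((γ - β) p - 1) dx` converges because `β > γ` and
equals a multiple of `t ^ ((γ - β) p)`, which restores the weight `t ^ (γ p)`.
The general case follows by induction on `k`, applying the case `k = 1` to `f⁽ᵏ⁻¹⁾` and the
induction hypothesis to `f` with `γ - 1`.
-/

open Set MeasureTheory
open scoped ENNReal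

lemma setLIntegral_Ioc_rpow {r x : ℝ} (hr : -1 < r) (hx : 0 < x) :
    ∫⁻ t in Ioc 0 x, ENNReal.ofReal (t ^ r) = ENNReal.ofReal (x ^ (r + 1) / (r + 1)) := by
  have hint : IntegrableOn (fun t : ℝ ↦ t ^ r) (Ioc 0 x) :=
    (intervalIntegrable_iff_integrableOn_Ioc_of_le hx.le).1
      (intervalIntegral.intervalIntegrable_rpow' hr)
  rw [← ofReal_integral_eq_lintegral_ofReal hint
    ((ae_restrict_mem measurableSet_Ioc).mono fun t ht ↦ Real.rpow_nonneg ht.1.le r),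
    ← intervalIntegral.integral_of_le hx.le, integral_rpow (.inl hr), Real.zero_rpow (by linarith),
    sub_zero]

lemma setLIntegral_Ioi_rpow {r t : ℝ} (hr : r < -1) (ht : 0 < t) :
    ∫⁻ x in Ioi t, ENNReal.ofReal (x ^ r) = ENNReal.ofReal (t ^ (r + 1) / -(r + 1)) := by
  rw [← ofReal_integral_eq_lintegral_ofReal (integrableOn_Ioi_rpow_of_lt hr ht)
    ((ae_restrict_mem measurableSet_Ioi).mono fun x hx ↦ Real.rpow_nonneg (ht.trans hx).le r),
    integral_Ioi_rpow_of_lt hr ht, div_neg, neg_div]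

lemma lintegral_Ioi_mul_setLIntegral_Ioc {ψ φ : ℝ → ℝ≥0∞} (hψ : Measurable ψ)
    (hφ : Measurable φ) :
    ∫⁻ x in Ioi 0, ψ x * ∫⁻ t in Ioc 0 x, φ t = ∫⁻ t in Ioi 0, φ t * ∫⁻ x in Ioi t, ψ x := by
  let F : ℝ → ℝ → ℝ≥0∞ := fun x t ↦ if t ≤ x then ψ x * φ t else 0
  have hF : Measurable (Function.uncurry F) :=
    Measurable.ite (measurableSet_le measurable_snd measurable_fst)
      ((hψ.comp measurable_fst).mul (hφ.comp measurable_snd)) measurable_const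
  have h_inner_t (x : ℝ) : ∫⁻ t in Ioi 0, F x t = ψ x * ∫⁻ t in Ioc 0 x, φ t := by
    have : F x = (Iic x).indicator fun t ↦ ψ x * φ t := by
      ext t; simp [F, indicator_apply]
    rw [this, lintegral_indicator measurableSet_Iic, Measure.restrict_restrict measurableSet_Iic,
      Iic_inter_Ioi, lintegral_const_mul _ hφ]
  have h_inner_x {t : ℝ} (ht : t ∈ Ioi 0) : ∫⁻ x in Ioi 0, F x t = φ t * ∫⁻ x in Ioi t, ψ x := by
    have : (F · t) = (Ici t).indicator fun x ↦ φ t * ψ x := by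
      ext x; simp [F, indicator_apply, mul_comm]
    rw [this, lintegral_indicator measurableSet_Ici, Measure.restrict_restrict measurableSet_Ici,
      inter_eq_left.2 (Ici_subset_Ioi.2 ht), lintegral_const_mul _ hψ,
      setLIntegral_congr Ioi_ae_eq_Ici]
  calc ∫⁻ x in Ioi 0, ψ x * ∫⁻ t in Ioc 0 x, φ t
      = ∫⁻ x in Ioi 0, ∫⁻ t in Ioi 0, F x t := by simp_rw [h_inner_t]
    _ = ∫⁻ t in Ioi 0, ∫⁻ x in Ioi 0, F x t := lintegral_lintegral_swap hF.aemeasurable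
    _ = ∫⁻ t in Ioi 0, φ t * ∫⁻ x in Ioi t, ψ x := setLIntegral_congr_fun measurableSet_Ioi
          fun t ht ↦ h_inner_x ht

lemma one_sub_mul_div_sub_one_pos {p β : ℝ} (hp : 1 < p) (hβ : β < (p - 1) / p) :
    0 < 1 - β * (p / (p - 1)) := by
  rw [sub_pos, ← mul_div_assoc, div_lt_one (by linarith)]
  rwa [lt_div_iff₀ (by linarith)] at hβ

lemma setLIntegral_Ioc_rpow_le {p β x : ℝ} (hp : 1 < p) (hβ : β < (p - 1) / p) (hx : 0 < x)
    {φ : ℝ → ℝ≥0∞} (hφ : AEMeasurable φ (volume.restrict (Ioc 0 x))) :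
    (∫⁻ t in Ioc 0 x, φ t) ^ p ≤
      ENNReal.ofReal (x ^ (p - 1 - β * p) / (1 - β * (p / (p - 1))) ^ (p - 1)) *
        ∫⁻ t in Ioc 0 x, ENNReal.ofReal (t ^ (β * p)) * φ t ^ p := by
  set q := p / (p - 1)
  have hpq : p.HolderConjugate q := .conjExponent hp
  set s := 1 - β * q
  have hs : 0 < s := one_sub_mul_div_sub_one_pos hp hβ
  -- Hölder's inequality for `φ t = (t ^ β * φ t) * t ^ (-β)`
  have hsplit : ∫⁻ t in Ioc 0 x, φ t = ∫⁻ t in Ioc 0 x,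
      ((fun t ↦ ENNReal.ofReal (t ^ β) * φ t) * fun t ↦ ENNReal.ofReal (t ^ (-β))) t := by
    refine setLIntegral_congr_fun measurableSet_Ioc fun t ht ↦ ?_
    rw [Pi.mul_apply, mul_right_comm, ← ENNReal.ofReal_mul (Real.rpow_nonneg ht.1.le _),
      ← Real.rpow_add ht.1, add_neg_cancel, Real.rpow_zero, ENNReal.ofReal_one, one_mul]
  have hweighted : ∫⁻ t in Ioc 0 x, (ENNReal.ofReal (t ^ β) * φ t) ^ p =
      ∫⁻ t in Ioc 0 x, ENNReal.ofReal (t ^ (β * p)) * φ t ^ p := by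
    refine setLIntegral_congr_fun measurableSet_Ioc fun t ht ↦ ?_
    rw [ENNReal.mul_rpow_of_nonneg _ _ hpq.nonneg,
      ENNReal.ofReal_rpow_of_nonneg (Real.rpow_nonneg ht.1.le _) hpq.nonneg,
      ← Real.rpow_mul ht.1.le]
  have hpower : ∫⁻ t in Ioc 0 x, ENNReal.ofReal (t ^ (-β)) ^ q = ENNReal.ofReal (x ^ s / s) := by
    rw [show s = -β * q + 1 by ring, ← setLIntegral_Ioc_rpow (by linarith) hx]
    refine setLIntegral_congr_fun measurableSet_Ioc fun t ht ↦ ?_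
    rw [ENNReal.ofReal_rpow_of_nonneg (Real.rpow_nonneg ht.1.le _) hpq.symm.nonneg,
      ← Real.rpow_mul ht.1.le]
  have hconst : ENNReal.ofReal (x ^ s / s) ^ (1 / q * p) =
      ENNReal.ofReal (x ^ (p - 1 - β * p) / s ^ (p - 1)) := by
    have hsp : s * (p - 1) = p - 1 - β * p := by linear_combination -β * hpq.sub_one_mul_conj
    rw [one_div_mul_eq_div, hpq.div_conj_eq_sub_one,
      ENNReal.ofReal_rpow_of_nonneg (by positivity) hpq.sub_one_pos.le,
      Real.div_rpow (by positivity) hs.le, ← Real.rpow_mul hx.le, hsp]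
  calc (∫⁻ t in Ioc 0 x, φ t) ^ p
      ≤ ((∫⁻ t in Ioc 0 x, ENNReal.ofReal (t ^ (β * p)) * φ t ^ p) ^ (1 / p) *
          ENNReal.ofReal (x ^ s / s) ^ (1 / q)) ^ p := by
        rw [hsplit, ← hweighted, ← hpower]
        gcongr
        exact ENNReal.lintegral_mul_le_Lp_mul_Lq _ hpq (by fun_prop) (by fun_prop)
    _ = _ := by
        rw [ENNReal.mul_rpow_of_nonneg _ _ hpq.nonneg, ← ENNReal.rpow_mul, ← ENNReal.rpow_mul,
          one_div_mul_cancel hpq.ne_zero, ENNReal.rpow_one, hconst, mul_comm]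

lemma hardy_lintegral_le {p β γ : ℝ} (hp : 1 < p) (hγβ : γ < β) (hβ : β < (p - 1) / p)
    {φ : ℝ → ℝ≥0∞} (hφ : Measurable φ) :
    ∫⁻ x in Ioi 0, ENNReal.ofReal (x ^ ((γ - 1) * p)) * (∫⁻ t in Ioc 0 x, φ t) ^ p ≤
      ENNReal.ofReal (((1 - β * (p / (p - 1))) ^ (p - 1))⁻¹ / ((β - γ) * p)) *
        ∫⁻ t in Ioi 0, ENNReal.ofReal (t ^ (γ * p)) * φ t ^ p := by
  set c := (1 - β * (p / (p - 1))) ^ (p - 1)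
  set A := (γ - β) * p - 1
  have hp0 : 0 < p := by linarith
  have hβγ : 0 < β - γ := sub_pos.2 hγβ
  have hA : A < -1 := by have := mul_pos hβγ hp0; linarith
  have hψ : Measurable fun t : ℝ ↦ ENNReal.ofReal (t ^ (β * p)) * φ t ^ p := by fun_prop
  have hholder (x : ℝ) (hx : x ∈ Ioi 0) :
      ENNReal.ofReal (x ^ ((γ - 1) * p)) * (∫⁻ t in Ioc 0 x, φ t) ^ p ≤
        ENNReal.ofReal c⁻¹ * (ENNReal.ofReal (x ^ A) *
          ∫⁻ t in Ioc 0 x, ENNReal.ofReal (t ^ (β * p)) * φ t ^ p) := by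
    have hx : (0 : ℝ) < x := hx
    have hweight : ENNReal.ofReal (x ^ ((γ - 1) * p)) * ENNReal.ofReal (x ^ (p - 1 - β * p) / c) =
        ENNReal.ofReal c⁻¹ * ENNReal.ofReal (x ^ A) := by
      rw [← ENNReal.ofReal_mul (by positivity), ← ENNReal.ofReal_mul' (by positivity), mul_div,
        ← Real.rpow_add hx, div_eq_inv_mul]
      congr 3
      ring
    grw [setLIntegral_Ioc_rpow_le hp hβ hx hφ.aemeasurable, ← mul_assoc, hweight, mul_assoc]
  have htail (t : ℝ) (ht : t ∈ Ioi 0) :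
      ENNReal.ofReal (t ^ (β * p)) * φ t ^ p * ∫⁻ x in Ioi t, ENNReal.ofReal (x ^ A) =
        ENNReal.ofReal ((β - γ) * p)⁻¹ * (ENNReal.ofReal (t ^ (γ * p)) * φ t ^ p) := by
    have ht : (0 : ℝ) < t := ht
    have hweight : ENNReal.ofReal (t ^ (β * p)) * ENNReal.ofReal (t ^ (A + 1) / -(A + 1)) =
        ENNReal.ofReal ((β - γ) * p)⁻¹ * ENNReal.ofReal (t ^ (γ * p)) := by
      rw [← ENNReal.ofReal_mul (by positivity), ← ENNReal.ofReal_mul' (by positivity), mul_div,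
        ← Real.rpow_add ht, div_eq_inv_mul]
      congr 3 <;> ring
    rw [setLIntegral_Ioi_rpow hA ht, mul_right_comm, hweight, mul_assoc]
  calc ∫⁻ x in Ioi 0, ENNReal.ofReal (x ^ ((γ - 1) * p)) * (∫⁻ t in Ioc 0 x, φ t) ^ p
      ≤ ∫⁻ x in Ioi 0, ENNReal.ofReal c⁻¹ * (ENNReal.ofReal (x ^ A) *
          ∫⁻ t in Ioc 0 x, ENNReal.ofReal (t ^ (β * p)) * φ t ^ p) :=
        setLIntegral_mono' measurableSet_Ioi hholder
    _ = ENNReal.ofReal c⁻¹ * ∫⁻ t in Ioi 0, ENNReal.ofReal (t ^ (β * p)) * φ t ^ p *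
          ∫⁻ x in Ioi t, ENNReal.ofReal (x ^ A) := by
        rw [lintegral_const_mul' _ _ ENNReal.ofReal_ne_top,
          lintegral_Ioi_mul_setLIntegral_Ioc (by fun_prop) hψ]
    _ = ENNReal.ofReal c⁻¹ * (ENNReal.ofReal ((β - γ) * p)⁻¹ *
          ∫⁻ t in Ioi 0, ENNReal.ofReal (t ^ (γ * p)) * φ t ^ p) := by
        rw [setLIntegral_congr_fun measurableSet_Ioi htail,
          lintegral_const_mul' _ _ ENNReal.ofReal_ne_top]
    _ = _ := by
        rw [← mul_assoc, ← ENNReal.ofReal_mul' (by positivity), div_eq_mul_inv]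

noncomputable def weightedLpNorm (p a : ℝ) (g : ℝ → ℝ) : ℝ≥0∞ :=
  (∫⁻ x in Ioi 0, ENNReal.ofReal (|x ^ a * g x| ^ p)) ^ (1 / p)

lemma weightedLpNorm_rpow {p : ℝ} (hp : 0 < p) (a : ℝ) (g : ℝ → ℝ) :
    weightedLpNorm p a g ^ p = ∫⁻ x in Ioi 0, ENNReal.ofReal (x ^ (a * p)) * ‖g x‖ₑ ^ p := by
  rw [weightedLpNorm, ← ENNReal.rpow_mul, one_div_mul_cancel hp.ne', ENNReal.rpow_one]
  refine setLIntegral_congr_fun measurableSet_Ioi fun x (hx : 0 < x) ↦ ?_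
  rw [abs_mul, abs_of_nonneg (Real.rpow_nonneg hx.le _), Real.mul_rpow (by positivity)
    (abs_nonneg _), ← Real.rpow_mul hx.le, ENNReal.ofReal_mul (by positivity),
    ← ENNReal.ofReal_rpow_of_nonneg (abs_nonneg _) hp.le, Real.enorm_eq_ofReal_abs]

lemma ENNReal.le_ofReal_rpow_mul_of_rpow_le {a b : ℝ≥0∞} {C p : ℝ} (hp : 0 < p) (hC : 0 ≤ C)
    (h : a ^ p ≤ ENNReal.ofReal C * b ^ p) : a ≤ ENNReal.ofReal (C ^ (1 / p)) * b := by
  have hroot (c : ℝ≥0∞) : (c ^ p) ^ (1 / p) = c := by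
    rw [← ENNReal.rpow_mul, mul_one_div_cancel hp.ne', ENNReal.rpow_one]
  calc a = (a ^ p) ^ (1 / p) := (hroot a).symm
    _ ≤ (ENNReal.ofReal C * b ^ p) ^ (1 / p) := by gcongr
    _ = ENNReal.ofReal (C ^ (1 / p)) * b := by
      rw [ENNReal.mul_rpow_of_nonneg _ _ (by positivity), hroot,
        ENNReal.ofReal_rpow_of_nonneg hC (by positivity)]

lemma enorm_sub_le_setLIntegral_enorm_derivWithin {E : Type*} [NormedAddCommGroup E]
    [NormedSpace ℝ E] [CompleteSpace E] {g : ℝ → E} {a x : ℝ} (hg : ContDiffOn ℝ 1 g (Ici a))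
    (hx : a ≤ x) : ‖g x - g a‖ₑ ≤ ∫⁻ t in Ioc a x, ‖derivWithin g (Ici a) t‖ₑ := by
  have hg' := hg.continuousOn_derivWithin (uniqueDiffOn_Ici a) le_rfl
  have hderiv (t : ℝ) (ht : t ∈ Ioo a x) :
      HasDerivWithinAt g (derivWithin g (Ici a) t) (Ioi t) t :=
    (hg.differentiableOn one_ne_zero t ht.1.le).hasDerivWithinAt.mono (Ioi_subset_Ici ht.1.le)
  rw [← intervalIntegral.integral_eq_sub_of_hasDeriv_right_of_le hx
    (hg.continuousOn.mono Icc_subset_Ici_self) hderiv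
    ((hg'.mono Icc_subset_Ici_self).intervalIntegrable_of_Icc hx),
    intervalIntegral.integral_of_le hx]
  exact enorm_integral_le_lintegral_enorm _

theorem weightedLpNorm_le_derivWithin {p γ : ℝ} (hp : 1 < p) (hγ : γ < (p - 1) / p) :
    ∃ C > 0, ∀ g : ℝ → ℝ, ContDiffOn ℝ 1 g (Ici 0) → g 0 = 0 →
      weightedLpNorm p (γ - 1) g ≤
        ENNReal.ofReal C * weightedLpNorm p γ (derivWithin g (Ici 0)) := by
  obtain ⟨β, hγβ, hβ⟩ := exists_between hγ
  have hp0 : 0 < p := by linarith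
  have hC : 0 < ((1 - β * (p / (p - 1))) ^ (p - 1))⁻¹ / ((β - γ) * p) := by
    have := one_sub_mul_div_sub_one_pos hp hβ
    have := sub_pos.2 hγβ
    positivity
  refine ⟨_, Real.rpow_pos_of_pos hC (1 / p), fun g hg hg0 ↦
    ENNReal.le_ofReal_rpow_mul_of_rpow_le hp0 hC.le ?_⟩
  have hderiv {t : ℝ} (ht : 0 < t) : derivWithin g (Ici 0) t = deriv g t :=
    derivWithin_of_mem_nhds (Ici_mem_nhds ht)
  have hftc {x : ℝ} (hx : 0 < x) : ‖g x‖ₑ ≤ ∫⁻ t in Ioc 0 x, ‖deriv g t‖ₑ :=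
    calc ‖g x‖ₑ = ‖g x - g 0‖ₑ := by rw [hg0, sub_zero]
      _ ≤ ∫⁻ t in Ioc 0 x, ‖derivWithin g (Ici 0) t‖ₑ :=
        enorm_sub_le_setLIntegral_enorm_derivWithin hg hx.le
      _ = ∫⁻ t in Ioc 0 x, ‖deriv g t‖ₑ :=
        setLIntegral_congr_fun measurableSet_Ioc fun t ht ↦ by rw [hderiv ht.1]
  rw [weightedLpNorm_rpow hp0, weightedLpNorm_rpow hp0]
  calc ∫⁻ x in Ioi 0, ENNReal.ofReal (x ^ ((γ - 1) * p)) * ‖g x‖ₑ ^ p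
      ≤ ∫⁻ x in Ioi 0, ENNReal.ofReal (x ^ ((γ - 1) * p)) * (∫⁻ t in Ioc 0 x, ‖deriv g t‖ₑ) ^ p :=
        setLIntegral_mono' measurableSet_Ioi fun x hx ↦ by grw [hftc hx]
    _ ≤ _ := hardy_lintegral_le hp hγβ hβ (measurable_deriv g).enorm
    _ = _ := by
      congr 1
      refine setLIntegral_congr_fun measurableSet_Ioi fun t ht ↦ ?_
      rw [hderiv ht]

theorem weighted_hardy_inequality_general (p γ : ℝ) (hp : 1 < p) (hγ : γ < (p - 1) / p)
    (k : ℕ) :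
    ∃ C > 0, ∀ f : ℝ → ℝ, ContDiffOn ℝ k f (Set.Ici 0) →
      (∀ j < k, iteratedDerivWithin j f (Set.Ici 0) 0 = 0) →
      (∫⁻ x in Set.Ioi (0 : ℝ), ENNReal.ofReal (|x ^ (γ - k) * f x| ^ p)) ^ (1 / p)
        ≤ ENNReal.ofReal C *
          (∫⁻ x in Set.Ioi (0 : ℝ),
            ENNReal.ofReal (|x ^ γ * iteratedDerivWithin k f (Set.Ici 0) x| ^ p)) ^ (1 / p) := by
  induction k generalizing γ with
  | zero => exact ⟨1, one_pos, fun f _ _ ↦ by simp⟩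
  | succ n ih =>
    obtain ⟨C₁, hC₁, hf_le⟩ := ih (γ - 1) (by linarith)
    obtain ⟨C₂, hC₂, hderiv_le⟩ := weightedLpNorm_le_derivWithin hp hγ
    refine ⟨C₁ * C₂, by positivity, fun f hf hf0 ↦ ?_⟩
    rw [contDiffOn_nat_succ_iff_contDiffOn_one_iteratedDerivWithin (uniqueDiffOn_Ici 0)] at hf
    calc weightedLpNorm p (γ - ↑(n + 1)) f = weightedLpNorm p (γ - 1 - n) f := by
          rw [Nat.cast_succ, sub_add_eq_sub_sub, sub_right_comm]
      _ ≤ ENNReal.ofReal C₁ * weightedLpNorm p (γ - 1) (iteratedDerivWithin n f (Ici 0)) :=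
          hf_le f hf.1 fun j hj ↦ hf0 j (hj.trans n.lt_succ_self)
      _ ≤ ENNReal.ofReal C₁ *
            (ENNReal.ofReal C₂ * weightedLpNorm p γ (iteratedDerivWithin (n + 1) f (Ici 0))) := by
          rw [iteratedDerivWithin_succ]
          gcongr
          exact hderiv_le _ hf.2 (hf0 n n.lt_succ_self)
      _ = ENNReal.ofReal (C₁ * C₂) *
            weightedLpNorm p γ (iteratedDerivWithin (n + 1) f (Ici 0)) := by
          rw [ENNReal.ofReal_mul hC₁.le, mul_assoc]

/-- Weighted Hardy inequality (Kufner–Persson): for `p ∈ (1,∞)`, `γ < (p−1)/p` and `k ≥ 1`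
there is `C = C(k,p,γ) > 0` such that for every `f` of class `C^k` on `[0,∞)` with
`f(0) = ⋯ = f^(k−1)(0) = 0`,
`‖x^(γ−k) f‖_{L^p(0,∞)} ≤ C·‖x^γ f^(k)‖_{L^p(0,∞)}` (interpreted in `[0,∞]`). -/
theorem weighted_hardy_inequality (p γ : ℝ) (hp : 1 < p) (hγ : γ < (p - 1) / p)
    (k : ℕ) (hk : 1 ≤ k) :
    ∃ C > 0, ∀ f : ℝ → ℝ, ContDiffOn ℝ k f (Set.Ici 0) →
      (∀ j < k, iteratedDerivWithin j f (Set.Ici 0) 0 = 0) →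
      (∫⁻ x in Set.Ioi (0 : ℝ), ENNReal.ofReal (|x ^ (γ - k) * f x| ^ p)) ^ (1 / p)
        ≤ ENNReal.ofReal C *
          (∫⁻ x in Set.Ioi (0 : ℝ),
            ENNReal.ofReal (|x ^ γ * iteratedDerivWithin k f (Set.Ici 0) x| ^ p)) ^ (1 / p) :=
  weighted_hardy_inequality_general p γ hp hγ k
end

section
/- For every integer k ≥ 0 and every p ∈ (1, ∞) there exists a constant C = C(k, p) > 0 such that for every function f : [0, ∞) → ℝ of class C^(k+2), one has Σ_{j=0}^{k} ‖(d/dx)^j [ (f(x) − f(0) − x f'(0)) / x² ]‖_{L^p(0,∞)} ≤ C · Σ_{j=0}^{k} ‖f^(j+2)‖_{L^p(0,∞)}, where the inequality is interpreted in [0, ∞]. -/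
/-!
For `x > 0`, Taylor's formula with integral remainder gives
`(f x - f 0 - x f'(0)) / x² = ∫₀¹ (1 - t) f''(t x) dt`, and differentiating under the integral
sign `j` times gives `∫₀¹ (1 - t) tʲ f⁽ʲ⁺²⁾(t x) dt`. Each such average of dilations of
`F = f⁽ʲ⁺²⁾` is bounded on `Lᵖ(0, ∞)`: the dilation `F (t ·)` has `Lᵖ` norm `t^(-1/p) ‖F‖ₚ`, and
`t^(j - 1/p)` is integrable on `(0, 1)` because `p > 1`. The estimate is carried out by Hölder's
inequality in `t` followed by Tonelli's theorem.
-/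

open MeasureTheory Set intervalIntegral
open scoped ENNReal

theorem iteratedDerivWithin_eqOn_of_hasDerivAt {𝕜 E : Type*} [NontriviallyNormedField 𝕜]
    [NormedAddCommGroup E] [NormedSpace 𝕜 E] {s : Set 𝕜} (hs : IsOpen s) {φ : 𝕜 → E}
    {g : ℕ → 𝕜 → E} {k : ℕ} (h0 : EqOn φ (g 0) s)
    (hg : ∀ j < k, ∀ x ∈ s, HasDerivAt (g j) (g (j + 1) x) x) :
    ∀ j ≤ k, EqOn (iteratedDerivWithin j φ s) (g j) s := by
  intro j
  induction j with
  | zero => simpa only [iteratedDerivWithin_zero] using fun _ => h0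
  | succ j ih =>
    intro hj x hx
    rw [iteratedDerivWithin_succ, derivWithin_congr (ih (by omega)) (ih (by omega) hx),
      derivWithin_of_isOpen hs hx]
    exact (hg j (by omega) x hx).deriv

theorem ContDiffOn.hasDerivAt_iteratedDerivWithin_Ici {f : ℝ → ℝ} {n : WithTop ℕ∞} {a y : ℝ}
    {m : ℕ} (hf : ContDiffOn ℝ n f (Ici a)) (hm : m < n) (hy : a < y) :
    HasDerivAt (iteratedDerivWithin m f (Ici a)) (iteratedDerivWithin (m + 1) f (Ici a) y) y := by
  rw [iteratedDerivWithin_succ]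
  exact ((hf.differentiableOn_iteratedDerivWithin hm (uniqueDiffOn_Ici a)) y hy.le
    |>.hasDerivWithinAt.hasDerivAt (Ici_mem_nhds hy))

theorem ContinuousOn.comp_mul_const_Ici {F : ℝ → ℝ} (hF : ContinuousOn F (Ici 0)) {x : ℝ}
    (hx : 0 ≤ x) : ContinuousOn (fun t => F (t * x)) (Ici 0) :=
  hF.comp (continuous_mul_const x).continuousOn fun _ ht => mul_nonneg ht hx

section

variable {f f' f'' : ℝ → ℝ}

theorem taylor_remainder_div_sq_eq_integral (hf : ContinuousOn f (Ici 0))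
    (hf' : ContinuousOn f' (Ici 0)) (hf'' : ContinuousOn f'' (Ici 0))
    (hdf : ∀ y > 0, HasDerivAt f (f' y) y) (hdf' : ∀ y > 0, HasDerivAt f' (f'' y) y)
    {x : ℝ} (hx : 0 < x) :
    (f x - f 0 - x * f' 0) / x ^ 2 = ∫ t in (0 : ℝ)..1, (1 - t) * f'' (t * x) := by
  have hIcc : Icc (0 : ℝ) 1 ⊆ Ici 0 := Icc_subset_Ici_self
  have ftc := integral_eq_sub_of_hasDeriv_right_of_le zero_le_one
    (f := fun t => f (t * x) + (1 - t) * x * f' (t * x))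
    (f' := fun t => x ^ 2 * ((1 - t) * f'' (t * x)))
    (((hf.comp_mul_const_Ici hx.le).add
      ((by fun_prop : Continuous fun t : ℝ => (1 - t) * x).continuousOn.mul
        (hf'.comp_mul_const_Ici hx.le))).mono hIcc)
    (fun t ht => by
      have htx : 0 < t * x := mul_pos ht.1 hx
      have hφ := ((hdf _ htx).comp t ((hasDerivAt_id t).mul_const x)).add
        ((((hasDerivAt_id t).const_sub 1).mul_const x).mul
          ((hdf' _ htx).comp t ((hasDerivAt_id t).mul_const x)))
      refine (hφ.congr_deriv ?_).hasDerivWithinAt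
      simp only [id_eq, Function.comp_apply]
      ring)
    (ContinuousOn.intervalIntegrable_of_Icc zero_le_one
      ((continuousOn_const.mul ((by fun_prop : Continuous fun t : ℝ => 1 - t).continuousOn.mul
        (hf''.comp_mul_const_Ici hx.le))).mono hIcc))
  rw [intervalIntegral.integral_const_mul] at ftc
  simp only [one_mul, zero_mul, sub_self, sub_zero] at ftc
  rw [div_eq_iff (by positivity)]
  linear_combination -ftc

theorem hasDerivAt_integral_comp_mul {w : ℝ → ℝ} (hw : Continuous w)
    (hf : ContinuousOn f (Ici 0)) (hf' : ContinuousOn f' (Ici 0))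
    (hdf : ∀ y > 0, HasDerivAt f (f' y) y) {x : ℝ} (hx : 0 < x) :
    HasDerivAt (fun x => ∫ t in (0 : ℝ)..1, w t * f (t * x))
      (∫ t in (0 : ℝ)..1, w t * t * f' (t * x)) x := by
  obtain ⟨Mw, hMw⟩ := isCompact_Icc.exists_bound_of_continuousOn
    ((by fun_prop : Continuous fun t => w t * t).continuousOn (s := Icc 0 1))
  obtain ⟨M, hM⟩ := isCompact_Icc.exists_bound_of_continuousOn
    (hf'.mono (Icc_subset_Ici_self : Icc (0 : ℝ) (2 * x) ⊆ Ici 0))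
  have hIoc : uIoc (0 : ℝ) 1 = Ioc 0 1 := uIoc_of_le zero_le_one
  have hmeas : ∀ {g : ℝ → ℝ}, ContinuousOn g (Icc 0 1) →
      AEStronglyMeasurable g (volume.restrict (uIoc 0 1)) := fun hg => by
    rw [hIoc]
    exact (hg.mono Ioc_subset_Icc_self).aestronglyMeasurable measurableSet_Ioc
  have hcont : ∀ {v g : ℝ → ℝ}, Continuous v → ContinuousOn g (Ici 0) → ∀ y ≥ 0,
      ContinuousOn (fun t => v t * g (t * y)) (Icc 0 1) := fun hv hg y hy =>
    (hv.continuousOn.mul (hg.comp_mul_const_Ici hy)).mono Icc_subset_Ici_self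
  refine (intervalIntegral.hasDerivAt_integral_of_dominated_loc_of_deriv_le
    (F := fun y t => w t * f (t * y)) (F' := fun y t => w t * t * f' (t * y))
    (bound := fun _ => Mw * M) (Ioo_mem_nhds (half_lt_self hx) (by linarith : x < 2 * x))
    ?_ ?_ ?_ ?_ (intervalIntegrable_const (μ := volume)) ?_).2
  · filter_upwards [Ioi_mem_nhds hx] with y hy
    exact hmeas (hcont hw hf y (le_of_lt hy))
  · exact (hcont hw hf x hx.le).intervalIntegrable_of_Icc zero_le_one
  · exact hmeas (hcont (by fun_prop) hf' x hx.le)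
  · refine Filter.Eventually.of_forall fun t ht y hy => ?_
    rw [hIoc] at ht
    have hty : t * y ∈ Icc 0 (2 * x) :=
      ⟨by nlinarith [ht.1, hy.1], by nlinarith [ht.2, hy.1, hy.2]⟩
    rw [norm_mul]
    exact mul_le_mul (hMw t (Ioc_subset_Icc_self ht)) (hM _ hty) (norm_nonneg _)
      ((norm_nonneg _).trans (hMw t (Ioc_subset_Icc_self ht)))
  · refine Filter.Eventually.of_forall fun t ht y hy => ?_
    rw [hIoc] at ht
    have hty : 0 < t * y := mul_pos ht.1 (by linarith [hy.1])
    refine (((hdf _ hty).comp y ((hasDerivAt_id y).const_mul t)).const_mul (w t)).congr_deriv ?_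
    ring

end

theorem iteratedDerivWithin_taylor_quotient_eq {f : ℝ → ℝ} {k : ℕ}
    (hf : ContDiffOn ℝ (k + 2) f (Ici 0)) {j : ℕ} (hj : j ≤ k) {x : ℝ} (hx : 0 < x) :
    iteratedDerivWithin j (fun x => (f x - f 0 - x * derivWithin f (Ici 0) 0) / x ^ 2) (Ioi 0) x
      = ∫ t in (0 : ℝ)..1, (1 - t) * t ^ j * iteratedDerivWithin (j + 2) f (Ici 0) (t * x) := by
  set D : ℕ → ℝ → ℝ := fun n => iteratedDerivWithin n f (Ici 0)
  have hcont : ∀ n ≤ k + 2, ContinuousOn (D n) (Ici 0) := fun n hn =>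
    hf.continuousOn_iteratedDerivWithin (by exact_mod_cast hn) (uniqueDiffOn_Ici 0)
  have hderiv : ∀ n < k + 2, ∀ y > 0, HasDerivAt (D n) (D (n + 1) y) y := fun n hn _ hy =>
    hf.hasDerivAt_iteratedDerivWithin_Ici (by exact_mod_cast hn) hy
  refine iteratedDerivWithin_eqOn_of_hasDerivAt isOpen_Ioi
    (g := fun j x => ∫ t in (0 : ℝ)..1, (1 - t) * t ^ j * D (j + 2) (t * x)) ?_ ?_ j hj hx
  · intro x hx
    have hD0 : D 0 = f := iteratedDerivWithin_zero
    have hD1 : D 1 0 = derivWithin f (Ici 0) 0 := by simp only [D, iteratedDerivWithin_one]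
    have := taylor_remainder_div_sq_eq_integral (hcont 0 (by omega)) (hcont 1 (by omega))
      (hcont 2 (by omega)) (hderiv 0 (by omega)) (hderiv 1 (by omega)) hx
    simpa only [hD0, hD1, pow_zero, mul_one] using this
  · intro j hj x hx
    have := hasDerivAt_integral_comp_mul (w := fun t => (1 - t) * t ^ j) (by fun_prop)
      (hcont (j + 2) (by omega)) (hcont (j + 3) (by omega)) (hderiv (j + 2) (by omega)) hx
    refine this.congr_deriv (integral_congr fun t _ => ?_)
    rw [show j + 1 + 2 = j + 3 from rfl]
    ring

theorem lintegral_Ioi_comp_mul_left (h : ℝ → ℝ≥0∞) {t : ℝ} (ht : 0 < t) :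
    ∫⁻ x in Ioi 0, h (t * x) = (ENNReal.ofReal t)⁻¹ * ∫⁻ y in Ioi 0, h y := by
  have hemb : MeasurableEmbedding (t * ·) := (Homeomorph.mulLeft₀ t ht.ne').measurableEmbedding
  have hmap : Measure.map (t * ·) (volume.restrict (Ioi 0))
      = (ENNReal.ofReal t)⁻¹ • volume.restrict (Ioi 0) := by
    have hpre : (t * ·) ⁻¹' Ioi 0 = Ioi (0 : ℝ) := by rw [preimage_const_mul_Ioi₀ _ ht, zero_div]
    conv_lhs => rw [← hpre, ← hemb.restrict_map]
    rw [Real.map_volume_mul_left ht.ne', Measure.restrict_smul, abs_of_pos (inv_pos.mpr ht),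
      ENNReal.ofReal_inv_of_pos ht]
  rw [← hemb.lintegral_map, hmap, lintegral_smul_measure, smul_eq_mul]

theorem lintegral_Ioc_ofReal_rpow_ne_top {r : ℝ} (hr : -1 < r) :
    ∫⁻ t in Ioc (0 : ℝ) 1, ENNReal.ofReal t ^ r ≠ ∞ := by
  have hint : IntegrableOn (fun t : ℝ => t ^ r) (Ioc 0 1) :=
    (intervalIntegrable_iff_integrableOn_Ioc_of_le zero_le_one).1 (intervalIntegrable_rpow' hr)
  rw [setLIntegral_congr_fun measurableSet_Ioc fun t ht => ENNReal.ofReal_rpow_of_pos ht.1]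
  exact hint.lintegral_lt_top.ne

theorem rpow_lintegral_Ioc_rpow_mul_le {p q : ℝ} (hpq : p.HolderConjugate q) (s a : ℝ)
    {g : ℝ → ℝ≥0∞} (hg : Measurable g) :
    (∫⁻ t in Ioc (0 : ℝ) 1, ENNReal.ofReal t ^ s * g t) ^ p
      ≤ (∫⁻ t in Ioc (0 : ℝ) 1, ENNReal.ofReal t ^ ((s - a) * q)) ^ (p / q)
        * ∫⁻ t in Ioc (0 : ℝ) 1, ENNReal.ofReal t ^ (a * p) * g t ^ p := by
  have hsplit : ∀ t ∈ Ioc (0 : ℝ) 1, ENNReal.ofReal t ^ s * g t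
      = ENNReal.ofReal t ^ (s - a) * (ENNReal.ofReal t ^ a * g t) := fun t ht => by
    rw [← mul_assoc, ← ENNReal.rpow_add _ _ (by simpa using ht.1) ENNReal.ofReal_ne_top,
      sub_add_cancel]
  have holder := ENNReal.lintegral_mul_le_Lp_mul_Lq (volume.restrict (Ioc (0 : ℝ) 1)) hpq.symm
    (f := fun t => ENNReal.ofReal t ^ (s - a)) (g := fun t => ENNReal.ofReal t ^ a * g t)
    (by fun_prop) (by fun_prop)
  simp only [Pi.mul_apply, ← ENNReal.rpow_mul,
    ENNReal.mul_rpow_of_nonneg _ _ hpq.nonneg] at holder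
  rw [setLIntegral_congr_fun measurableSet_Ioc hsplit]
  calc _ ≤ ((∫⁻ t in Ioc (0 : ℝ) 1, ENNReal.ofReal t ^ ((s - a) * q)) ^ (1 / q)
        * (∫⁻ t in Ioc (0 : ℝ) 1, ENNReal.ofReal t ^ (a * p) * g t ^ p) ^ (1 / p)) ^ p :=
      ENNReal.rpow_le_rpow holder hpq.nonneg
    _ = _ := by
      rw [ENNReal.mul_rpow_of_nonneg _ _ hpq.nonneg, ← ENNReal.rpow_mul, ← ENNReal.rpow_mul,
        one_div_mul_eq_div, one_div_mul_cancel hpq.ne_zero, ENNReal.rpow_one]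

theorem lintegral_Ioi_rpow_lintegral_dilation_le {p s : ℝ} (hp : 1 < p) (hs : 1 / p - 1 < s) :
    ∃ C : ℝ≥0∞, C ≠ ∞ ∧ ∀ G : ℝ → ℝ≥0∞, Measurable G →
      ∫⁻ x in Ioi 0, (∫⁻ t in Ioc (0 : ℝ) 1, ENNReal.ofReal t ^ s * G (t * x)) ^ p
        ≤ C * ∫⁻ x in Ioi 0, G x ^ p := by
  obtain ⟨q, hpq⟩ : ∃ q, p.HolderConjugate q := ⟨_, .conjExponent hp⟩
  -- Hölder in `t` after splitting `tˢ = t^(s - a) * tᵃ`; this midpoint choice of `a` makes both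
  -- `t^((s - a) q)` and `t^(a p - 1)` integrable at `0`.
  set a := (s + 1 - 1 / p) / 2
  have hq0 := hpq.symm.pos
  have hqinv : q⁻¹ = 1 - 1 / p := by rw [one_div]; linarith [hpq.inv_add_inv_eq_one]
  have ha : 0 < a * p := mul_pos (by simp only [a]; linarith) hpq.pos
  have hq : -1 < (s - a) * q := by
    have hsq : -1 < s * q := by
      have := mul_lt_mul_of_pos_right (show -q⁻¹ < s by linarith) hq0
      rwa [neg_mul, inv_mul_cancel₀ hq0.ne'] at this
    have : (s - a) * q = (s * q - q⁻¹ * q) / 2 := by simp only [a]; rw [hqinv]; ring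
    rw [this, inv_mul_cancel₀ hq0.ne']
    linarith
  set K := ∫⁻ t in Ioc (0 : ℝ) 1, ENNReal.ofReal t ^ ((s - a) * q)
  set L := ∫⁻ t in Ioc (0 : ℝ) 1, ENNReal.ofReal t ^ (a * p - 1)
  refine ⟨K ^ (p / q) * L, ?_, fun G hG => ?_⟩
  · exact ENNReal.mul_ne_top (ENNReal.rpow_ne_top_of_nonneg (div_nonneg hpq.nonneg hq0.le)
      (lintegral_Ioc_ofReal_rpow_ne_top hq)) (lintegral_Ioc_ofReal_rpow_ne_top (by linarith))
  have hdil : ∀ t ∈ Ioc (0 : ℝ) 1,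
      ∫⁻ x in Ioi 0, ENNReal.ofReal t ^ (a * p) * G (t * x) ^ p
        = ENNReal.ofReal t ^ (a * p - 1) * ∫⁻ x in Ioi 0, G x ^ p := fun t ht => by
    rw [lintegral_const_mul' _ _ (by simp [ht.1]), lintegral_Ioi_comp_mul_left (G · ^ p) ht.1,
      ← mul_assoc, ENNReal.rpow_sub _ _ (by simpa using ht.1) ENNReal.ofReal_ne_top,
      ENNReal.rpow_one, div_eq_mul_inv]
  calc ∫⁻ x in Ioi 0, (∫⁻ t in Ioc (0 : ℝ) 1, ENNReal.ofReal t ^ s * G (t * x)) ^ p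
      ≤ ∫⁻ x in Ioi 0, K ^ (p / q) *
          ∫⁻ t in Ioc (0 : ℝ) 1, ENNReal.ofReal t ^ (a * p) * G (t * x) ^ p :=
        lintegral_mono fun x => rpow_lintegral_Ioc_rpow_mul_le hpq s a (by fun_prop)
    _ = K ^ (p / q) *
          ∫⁻ t in Ioc (0 : ℝ) 1, ∫⁻ x in Ioi 0, ENNReal.ofReal t ^ (a * p) * G (t * x) ^ p := by
        rw [lintegral_const_mul _ (by fun_prop), lintegral_lintegral_swap (by fun_prop)]
    _ = K ^ (p / q) * L * ∫⁻ x in Ioi 0, G x ^ p := by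
        rw [setLIntegral_congr_fun measurableSet_Ioc hdil, lintegral_mul_const _ (by fun_prop),
          mul_assoc]

theorem lintegral_Ioi_rpow_integral_dilation_le {p : ℝ} (hp : 1 < p) (j : ℕ) :
    ∃ C : ℝ≥0∞, C ≠ ∞ ∧ ∀ F : ℝ → ℝ, ContinuousOn F (Ioi 0) →
      (∫⁻ x in Ioi 0, ENNReal.ofReal (|∫ t in (0 : ℝ)..1, (1 - t) * t ^ j * F (t * x)| ^ p))
          ^ (1 / p)
        ≤ C * (∫⁻ x in Ioi 0, ENNReal.ofReal (|F x| ^ p)) ^ (1 / p) := by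
  have hp0 : 0 ≤ p := by linarith
  have hofReal : ∀ a : ℝ, ENNReal.ofReal (|a| ^ p) = ‖a‖ₑ ^ p := fun a => by
    rw [Real.enorm_eq_ofReal_abs, ENNReal.ofReal_rpow_of_nonneg (abs_nonneg a) hp0]
  obtain ⟨C, hC, hardy⟩ := lintegral_Ioi_rpow_lintegral_dilation_le hp (s := j)
    (by have := (div_lt_one (by linarith : 0 < p)).2 hp; have := j.cast_nonneg (α := ℝ); linarith)
  refine ⟨C ^ (1 / p), ENNReal.rpow_ne_top_of_nonneg (by positivity) hC, fun F hF => ?_⟩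
  classical
  set G : ℝ → ℝ≥0∞ := (Ioi 0).piecewise (‖F ·‖ₑ) 0
  have hG : Measurable G := (continuous_enorm.comp_continuousOn hF).measurable_piecewise
    continuousOn_const measurableSet_Ioi
  have hGeq : ∀ y ∈ Ioi (0 : ℝ), G y = ‖F y‖ₑ := fun y hy => piecewise_eq_of_mem _ _ _ hy
  have hpointwise : ∀ x ∈ Ioi (0 : ℝ),
      ‖∫ t in (0 : ℝ)..1, (1 - t) * t ^ j * F (t * x)‖ₑ
        ≤ ∫⁻ t in Ioc (0 : ℝ) 1, ENNReal.ofReal t ^ (j : ℝ) * G (t * x) := fun x hx => by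
    rw [intervalIntegral.integral_of_le zero_le_one]
    refine (enorm_integral_le_lintegral_enorm _).trans (setLIntegral_mono' measurableSet_Ioc ?_)
    intro t ht
    have htx : t * x ∈ Ioi 0 := mul_pos ht.1 hx
    rw [hGeq _ htx, enorm_mul, enorm_mul, ENNReal.rpow_natCast,
      ← ENNReal.ofReal_pow ht.1.le, ← Real.enorm_eq_ofReal (pow_nonneg ht.1.le j)]
    gcongr
    calc ‖1 - t‖ₑ * ‖t ^ j‖ₑ ≤ 1 * ‖t ^ j‖ₑ := by
          gcongr
          rw [Real.enorm_eq_ofReal (by linarith [ht.2])]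
          exact ENNReal.ofReal_le_one.2 (by linarith [ht.1])
      _ = ‖t ^ j‖ₑ := one_mul _
  calc _ ≤ (C * ∫⁻ x in Ioi 0, G x ^ p) ^ (1 / p) := by
        gcongr
        refine (setLIntegral_mono' measurableSet_Ioi fun x hx => ?_).trans (hardy G hG)
        rw [hofReal]
        gcongr
        exact hpointwise x hx
    _ = C ^ (1 / p) * (∫⁻ x in Ioi 0, ENNReal.ofReal (|F x| ^ p)) ^ (1 / p) := by
        rw [ENNReal.mul_rpow_of_nonneg _ _ (by positivity),
          setLIntegral_congr_fun measurableSet_Ioi fun x hx => by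
            rw [hGeq x hx, ← hofReal]]

/-- Sobolev bound for `(If)' = (f(x) − f(0) − x f'(0))/x²`: for `k ≥ 0` and `p ∈ (1,∞)` there is
`C = C(k,p) > 0` such that for all `f` of class `C^(k+2)` on `[0,∞)`,
`Σ_{j=0}^k ‖(d/dx)^j [(f(x) − f(0) − x f'(0))/x²]‖_{L^p(0,∞)} ≤ C·Σ_{j=0}^k ‖f^(j+2)‖_{L^p(0,∞)}`
(interpreted in `[0,∞]`). -/
theorem If_deriv_sobolev_bound (k : ℕ) (p : ℝ) (hp : 1 < p) :
    ∃ C > 0, ∀ f : ℝ → ℝ, ContDiffOn ℝ (k + 2) f (Set.Ici 0) →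
      ∑ j ∈ Finset.range (k + 1),
          (∫⁻ x in Set.Ioi (0 : ℝ),
            ENNReal.ofReal
              (|iteratedDerivWithin j
                  (fun x => (f x - f 0 - x * derivWithin f (Set.Ici 0) 0) / x ^ 2)
                  (Set.Ioi 0) x| ^ p)) ^ (1 / p)
        ≤ ENNReal.ofReal C *
          ∑ j ∈ Finset.range (k + 1),
            (∫⁻ x in Set.Ioi (0 : ℝ),
              ENNReal.ofReal (|iteratedDerivWithin (j + 2) f (Set.Ici 0) x| ^ p)) ^ (1 / p) := by
  choose D hD hbound using fun j => lintegral_Ioi_rpow_integral_dilation_le hp j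
  set S := ∑ j ∈ Finset.range (k + 1), D j
  have hS : S ≠ ∞ := ENNReal.sum_ne_top.2 fun j _ => hD j
  refine ⟨S.toReal + 1, by positivity, fun f hf => ?_⟩
  rw [Finset.mul_sum]
  refine Finset.sum_le_sum fun j hj => ?_
  have hjk : j ≤ k := Nat.lt_succ_iff.1 (Finset.mem_range.1 hj)
  have hcont : ContinuousOn (iteratedDerivWithin (j + 2) f (Ici 0)) (Ioi 0) :=
    (hf.continuousOn_iteratedDerivWithin (by exact_mod_cast Nat.add_le_add_right hjk 2)
      (uniqueDiffOn_Ici 0)).mono Ioi_subset_Ici_self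
  rw [setLIntegral_congr_fun measurableSet_Ioi fun x hx => by
    rw [iteratedDerivWithin_taylor_quotient_eq hf hjk hx]]
  refine (hbound j _ hcont).trans ?_
  gcongr
  calc D j ≤ S := Finset.single_le_sum (fun i _ => zero_le) hj
    _ = ENNReal.ofReal S.toReal := (ENNReal.ofReal_toReal hS).symm
    _ ≤ ENNReal.ofReal (S.toReal + 1) := ENNReal.ofReal_le_ofReal (by linarith)
end

section
/- For every real r ≥ 1 and every t ∈ [0, 1), the following chain of inequalities holds: 2r·t^(2r−1)/(1 − t^(2r)) ≤ 2t/(1 − t²) ≤ 2r·t/(1 − t^(2r)) ≤ 2r·t^(2r−1)/(1 − t^(2r)) + 2r. -/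
/-!
With `s = t²`, the first two inequalities say that the secant slope `(1 - s^r) / (1 - s)` of the
convex function `x ↦ x^r` on `[s, 1]` lies between its derivatives `r s^(r-1)` at `s` and `r` at `1`.
The last one reduces to `0 ≤ (1 - t) (1 + t^(2r-1))`.
-/

open Real Set

namespace Real

variable {p s : ℝ}

theorem mul_rpow_sub_one_le_slope_rpow (hp : 1 ≤ p) (hs : 0 ≤ s) (hs1 : s < 1) :
    p * s ^ (p - 1) ≤ slope (fun x : ℝ ↦ x ^ p) s 1 :=
  (convexOn_rpow hp).le_slope_of_hasDerivAt (mem_Ici.2 hs) (mem_Ici.2 zero_le_one) hs1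
    (hasDerivAt_rpow_const (.inr hp))

theorem slope_rpow_le (hp : 1 ≤ p) (hs : 0 ≤ s) (hs1 : s < 1) :
    slope (fun x : ℝ ↦ x ^ p) s 1 ≤ p := by
  simpa using (convexOn_rpow hp).slope_le_of_hasDerivAt (mem_Ici.2 hs) (mem_Ici.2 zero_le_one) hs1
    (hasDerivAt_rpow_const (.inr hp))

theorem slope_rpow_one (p s : ℝ) : slope (fun x : ℝ ↦ x ^ p) s 1 = (1 - s ^ p) / (1 - s) := by
  rw [slope_def_field, one_rpow]

end Real

/-- Chain of kernel inequalities: for `r ≥ 1` and `t ∈ [0, 1)`,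
`2r·t^(2r−1)/(1 − t^(2r)) ≤ 2t/(1 − t²) ≤ 2r·t/(1 − t^(2r)) ≤ 2r·t^(2r−1)/(1 − t^(2r)) + 2r`. -/
theorem kernel_inequalities (r t : ℝ) (hr : 1 ≤ r) (ht : t ∈ Set.Ico (0 : ℝ) 1) :
    2 * r * t ^ (2 * r - 1) / (1 - t ^ (2 * r)) ≤ 2 * t / (1 - t ^ 2) ∧
    2 * t / (1 - t ^ 2) ≤ 2 * r * t / (1 - t ^ (2 * r)) ∧
    2 * r * t / (1 - t ^ (2 * r)) ≤ 2 * r * t ^ (2 * r - 1) / (1 - t ^ (2 * r)) + 2 * r := by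
  obtain ⟨ht0, ht1⟩ := ht
  set s := t ^ 2
  have hs0 : 0 ≤ s := sq_nonneg t
  have hs1 : s < 1 := by nlinarith
  have h2r : t ^ (2 * r) = s ^ r := by rw [rpow_mul ht0, rpow_two]
  have h2r1 : t ^ (2 * r - 1) = t * s ^ (r - 1) := by
    rw [show 2 * r - 1 = 1 + 2 * (r - 1) by ring, rpow_one_add' ht0 (by linarith), rpow_mul ht0,
      rpow_two]
  have hsr : s ^ r = s * s ^ (r - 1) := by
    rw [← rpow_one_add' hs0 (by linarith), add_sub_cancel]
  have hd : 0 < 1 - s ^ r := sub_pos.2 (rpow_lt_one hs0 hs1 (by linarith))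
  have hd2 : 0 < 1 - s := sub_pos.2 hs1
  have hlower := mul_rpow_sub_one_le_slope_rpow hr hs0 hs1
  have hupper := slope_rpow_le hr hs0 hs1
  rw [slope_rpow_one, le_div_iff₀ hd2] at hlower
  rw [slope_rpow_one, div_le_iff₀ hd2] at hupper
  rw [h2r, h2r1]
  refine ⟨?_, ?_, ?_⟩
  · rw [div_le_div_iff₀ hd hd2]
    nlinarith [mul_le_mul_of_nonneg_left hlower ht0]
  · rw [div_le_div_iff₀ hd2 hd]
    nlinarith [mul_le_mul_of_nonneg_left hupper ht0]
  · have hv : 0 ≤ s ^ (r - 1) := rpow_nonneg hs0 _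
    rw [div_add' _ _ _ hd.ne', div_le_div_iff_of_pos_right hd, hsr]
    nlinarith [mul_nonneg (mul_nonneg (by linarith : 0 ≤ r) (sub_nonneg.2 ht1.le))
      (add_nonneg zero_le_one (mul_nonneg ht0 hv))]
end

section
/- For every real r ≥ 1, the function t ↦ (2t/(1 − t²) − 2r·t^(2r−1)/(1 − t^(2r)))·t^(−1/2) is nonnegative on (0, ∞) \ {1}, and its Lebesgue integral over (0, ∞) satisfies ∫₀^∞ (2t/(1 − t²) − 2r·t^(2r−1)/(1 − t^(2r)))·t^(−1/2) dt ≤ (20√2/3)·r. -/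
/-!
Put `u = t²`. For `t > 0` the bracket of the integrand is `(2/t)·(u/(1−u) − r·u^r/(1−u^r))`, and
the two bounds `0 ≤ u/(1−u) − r·u^r/(1−u^r) ≤ r − 1` are Bernoulli's inequality
`1 + r(v − 1) ≤ v^r`, at `v = u⁻¹` and at `v = u`, once the denominators are cleared using
`(1−u)(1−u^r) > 0`. Hence the integrand is at most `(8/3)·t^(1/2)` on `(0, 1/2]`, where the
subtracted term is nonnegative, and at most `(2r − 2)·t^(−3/2)` on `(1/2, ∞)`; these majorants
integrate to `4√2/9` and `4√2(r − 1)`.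
-/

open MeasureTheory Set

lemma one_add_mul_sub_one_le_rpow {u r : ℝ} (hu : 0 ≤ u) (hr : 1 ≤ r) :
    1 + r * (u - 1) ≤ u ^ r := by
  simpa using one_add_mul_self_le_rpow_one_add (s := u - 1) (by linarith) hr

lemma div_le_div_of_mul_pos {K : Type*} [Field K] [LinearOrder K] [IsStrictOrderedRing K]
    {a b c d : K} (hbd : 0 < b * d) (h : a * d ≤ c * b) : a / b ≤ c / d := by
  have hb : b ≠ 0 := left_ne_zero_of_mul hbd.ne'
  have hd : d ≠ 0 := right_ne_zero_of_mul hbd.ne'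
  calc a / b = a * d / (b * d) := by field_simp
    _ ≤ c * b / (b * d) := div_le_div_of_nonneg_right h hbd.le
    _ = c / d := by field_simp

lemma one_sub_mul_one_sub_rpow_pos {u r : ℝ} (hu : 0 < u) (hu1 : u ≠ 1) (hr : 0 < r) :
    0 < (1 - u) * (1 - u ^ r) := by
  rcases hu1.lt_or_gt with hlt | hgt
  · have := Real.rpow_lt_one hu.le hlt hr
    exact mul_pos (by linarith) (by linarith)
  · have := Real.one_lt_rpow hgt hr
    exact mul_pos_of_neg_of_neg (by linarith) (by linarith)

lemma mul_rpow_div_one_sub_rpow_le {u r : ℝ} (hu : 0 < u) (hu1 : u ≠ 1) (hr : 1 ≤ r) :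
    r * u ^ r / (1 - u ^ r) ≤ u / (1 - u) := by
  have hpos := one_sub_mul_one_sub_rpow_pos hu hu1 (by linarith : 0 < r)
  refine div_le_div_of_mul_pos (by linarith) ?_
  have hur : 0 < u ^ r := Real.rpow_pos_of_pos hu r
  have h := one_add_mul_sub_one_le_rpow (inv_pos.2 hu).le hr
  rw [Real.inv_rpow hu.le] at h
  field_simp at h
  linear_combination h

lemma div_one_sub_sub_mul_rpow_div_le {u r : ℝ} (hu : 0 < u) (hu1 : u ≠ 1) (hr : 1 ≤ r) :
    u / (1 - u) - r * u ^ r / (1 - u ^ r) ≤ r - 1 := by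
  have hpos := one_sub_mul_one_sub_rpow_pos hu hu1 (by linarith : 0 < r)
  have h1 : (1 - u) ≠ 0 := left_ne_zero_of_mul hpos.ne'
  have h2 : (1 - u ^ r) ≠ 0 := right_ne_zero_of_mul hpos.ne'
  have key : 1 / (1 - u) ≤ r / (1 - u ^ r) := by
    refine div_le_div_of_mul_pos hpos ?_
    linarith [one_add_mul_sub_one_le_rpow hu.le hr]
  have e1 : u / (1 - u) = 1 / (1 - u) - 1 := by field_simp; ring
  have e2 : r * u ^ r / (1 - u ^ r) = r / (1 - u ^ r) - r := by field_simp; ring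
  linarith

lemma lintegral_Ioc_zero_ofReal_rpow {a s : ℝ} (ha : 0 ≤ a) (hs : -1 < s) :
    ∫⁻ t in Ioc 0 a, ENNReal.ofReal (t ^ s) = ENNReal.ofReal (a ^ (s + 1) / (s + 1)) := by
  have hint : IntegrableOn (fun t : ℝ => t ^ s) (Ioc 0 a) :=
    (intervalIntegrable_iff_integrableOn_Ioc_of_le ha).1
      (intervalIntegral.intervalIntegrable_rpow' hs)
  rw [← ofReal_integral_eq_lintegral_ofReal hint
    ((ae_restrict_iff' measurableSet_Ioc).2 (.of_forall fun t ht => Real.rpow_nonneg ht.1.le s)),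
    ← intervalIntegral.integral_of_le ha, integral_rpow (Or.inl hs),
    Real.zero_rpow (by linarith), sub_zero]

lemma lintegral_Ioi_ofReal_rpow {a s : ℝ} (ha : 0 < a) (hs : s < -1) :
    ∫⁻ t in Ioi a, ENNReal.ofReal (t ^ s) = ENNReal.ofReal (-a ^ (s + 1) / (s + 1)) := by
  rw [← ofReal_integral_eq_lintegral_ofReal (integrableOn_Ioi_rpow_of_lt hs ha)
    ((ae_restrict_iff' measurableSet_Ioi).2
      (.of_forall fun t ht => Real.rpow_nonneg (ha.trans ht).le s)),
    integral_Ioi_rpow_of_lt hs ha]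

lemma half_rpow_neg_half : (1 / 2 : ℝ) ^ (-(1 / 2) : ℝ) = √2 := by
  rw [Real.rpow_neg (by norm_num), ← Real.sqrt_eq_rpow, one_div, Real.sqrt_inv, inv_inv]

lemma half_rpow_three_halves : (1 / 2 : ℝ) ^ (3 / 2 : ℝ) = √2 / 4 := by
  rw [show (3 / 2 : ℝ) = 2 + -(1 / 2) by norm_num, Real.rpow_add (by norm_num),
    half_rpow_neg_half, Real.rpow_two]
  ring

noncomputable def kernelDiff (r t : ℝ) : ℝ :=
  2 * t / (1 - t ^ 2) - 2 * r * t ^ (2 * r - 1) / (1 - t ^ (2 * r))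

lemma kernelDiff_eq {r t : ℝ} (ht : 0 < t) :
    kernelDiff r t = 2 / t * (t ^ 2 / (1 - t ^ 2) - r * (t ^ 2) ^ r / (1 - (t ^ 2) ^ r)) := by
  have hsq : (t ^ 2) ^ r = t ^ (2 * r) := by
    rw [← Real.rpow_natCast, ← Real.rpow_mul ht.le]; norm_num
  rw [kernelDiff, hsq, Real.rpow_sub_one ht.ne']
  field_simp

lemma kernelDiff_nonneg {r t : ℝ} (hr : 1 ≤ r) (ht : 0 < t) (ht1 : t ≠ 1) :
    0 ≤ kernelDiff r t := by
  have hsq : t ^ 2 ≠ 1 := by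
    rwa [Ne, pow_eq_one_iff_of_nonneg ht.le two_ne_zero]
  rw [kernelDiff_eq ht]
  exact mul_nonneg (by positivity)
    (sub_nonneg.2 (mul_rpow_div_one_sub_rpow_le (by positivity) hsq hr))

lemma kernelDiff_le_div {r t : ℝ} (hr : 1 ≤ r) (ht : 0 < t) :
    kernelDiff r t ≤ (2 * r - 2) / t := by
  rcases eq_or_ne t 1 with rfl | ht1
  -- both denominators vanish at `t = 1`, so `kernelDiff r 1 = 0`
  · simp only [kernelDiff, one_pow, sub_self, div_zero, Real.one_rpow, div_one]
    linarith
  have hsq : t ^ 2 ≠ 1 := by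
    rwa [Ne, pow_eq_one_iff_of_nonneg ht.le two_ne_zero]
  rw [kernelDiff_eq ht, show (2 * r - 2) / t = 2 / t * (r - 1) by ring]
  exact mul_le_mul_of_nonneg_left (div_one_sub_sub_mul_rpow_div_le (by positivity) hsq hr)
    (by positivity)

lemma kernelDiff_le_of_le_half {r t : ℝ} (hr : 0 ≤ r) (ht : 0 < t) (ht2 : t ≤ 1 / 2) :
    kernelDiff r t ≤ 8 / 3 * t := by
  have hsq : 0 < 1 - t ^ 2 := by nlinarith
  have hpow : t ^ (2 * r) ≤ 1 := Real.rpow_le_one ht.le (by linarith) (by positivity)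
  have hsub : 0 ≤ 2 * r * t ^ (2 * r - 1) / (1 - t ^ (2 * r)) := by
    have := Real.rpow_nonneg ht.le (2 * r - 1)
    exact div_nonneg (by positivity) (by linarith)
  have hmain : 2 * t / (1 - t ^ 2) ≤ 8 / 3 * t := by
    rw [div_le_iff₀ hsq]; nlinarith
  rw [kernelDiff]
  linarith

lemma ofReal_kernelDiff_mul_le_of_le_half {r t : ℝ} (hr : 0 ≤ r) (ht : t ∈ Ioc (0 : ℝ) (1 / 2)) :
    ENNReal.ofReal (kernelDiff r t * t ^ (-(1 / 2) : ℝ))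
      ≤ ENNReal.ofReal (8 / 3) * ENNReal.ofReal (t ^ (1 / 2 : ℝ)) := by
  rw [← ENNReal.ofReal_mul (by norm_num)]
  refine ENNReal.ofReal_le_ofReal ?_
  calc kernelDiff r t * t ^ (-(1 / 2) : ℝ) ≤ 8 / 3 * t * t ^ (-(1 / 2) : ℝ) :=
        mul_le_mul_of_nonneg_right (kernelDiff_le_of_le_half hr ht.1 ht.2)
          (Real.rpow_nonneg ht.1.le _)
    _ = 8 / 3 * t ^ (1 / 2 : ℝ) := by
        rw [mul_assoc, ← Real.rpow_one_add' ht.1.le (by norm_num)]; norm_num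

lemma ofReal_kernelDiff_mul_le_of_half_lt {r t : ℝ} (hr : 1 ≤ r) (ht : t ∈ Ioi (1 / 2 : ℝ)) :
    ENNReal.ofReal (kernelDiff r t * t ^ (-(1 / 2) : ℝ))
      ≤ ENNReal.ofReal (2 * r - 2) * ENNReal.ofReal (t ^ (-(3 / 2) : ℝ)) := by
  have ht0 : 0 < t := lt_trans (by norm_num) ht
  rw [← ENNReal.ofReal_mul (by linarith)]
  refine ENNReal.ofReal_le_ofReal ?_
  calc kernelDiff r t * t ^ (-(1 / 2) : ℝ) ≤ (2 * r - 2) / t * t ^ (-(1 / 2) : ℝ) :=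
        mul_le_mul_of_nonneg_right (kernelDiff_le_div hr ht0) (Real.rpow_nonneg ht0.le _)
    _ = (2 * r - 2) * t ^ (-(3 / 2) : ℝ) := by
        rw [div_eq_mul_inv, ← Real.rpow_neg_one t, mul_assoc, ← Real.rpow_add ht0]; norm_num

lemma lintegral_ofReal_kernelDiff_mul_le {r : ℝ} (hr : 1 ≤ r) :
    ∫⁻ t in Ioi (0 : ℝ), ENNReal.ofReal (kernelDiff r t * t ^ (-(1 / 2) : ℝ))
      ≤ ENNReal.ofReal (20 * √2 / 3 * r) := by
  calc ∫⁻ t in Ioi (0 : ℝ), ENNReal.ofReal (kernelDiff r t * t ^ (-(1 / 2) : ℝ))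
      ≤ (∫⁻ t in Ioc (0 : ℝ) (1 / 2), ENNReal.ofReal (kernelDiff r t * t ^ (-(1 / 2) : ℝ)))
        + ∫⁻ t in Ioi (1 / 2 : ℝ), ENNReal.ofReal (kernelDiff r t * t ^ (-(1 / 2) : ℝ)) := by
        rw [← Ioc_union_Ioi_eq_Ioi (by norm_num : (0 : ℝ) ≤ 1 / 2)]
        exact lintegral_union_le _ _ _
    _ ≤ (∫⁻ t in Ioc (0 : ℝ) (1 / 2), ENNReal.ofReal (8 / 3) * ENNReal.ofReal (t ^ (1 / 2 : ℝ)))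
        + ∫⁻ t in Ioi (1 / 2 : ℝ),
            ENNReal.ofReal (2 * r - 2) * ENNReal.ofReal (t ^ (-(3 / 2) : ℝ)) :=
        add_le_add
          (setLIntegral_mono' measurableSet_Ioc fun t ht =>
            ofReal_kernelDiff_mul_le_of_le_half (by linarith) ht)
          (setLIntegral_mono' measurableSet_Ioi fun t ht =>
            ofReal_kernelDiff_mul_le_of_half_lt hr ht)
    _ = ENNReal.ofReal (4 * √2 / 9 + (2 * r - 2) * (2 * √2)) := by
        rw [lintegral_const_mul' _ _ ENNReal.ofReal_ne_top,
          lintegral_const_mul' _ _ ENNReal.ofReal_ne_top,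
          lintegral_Ioc_zero_ofReal_rpow (by norm_num) (by norm_num),
          lintegral_Ioi_ofReal_rpow (by norm_num) (by norm_num),
          ← ENNReal.ofReal_mul (by norm_num), ← ENNReal.ofReal_mul (by linarith),
          ← ENNReal.ofReal_add (by positivity)
            (mul_nonneg (by linarith) (by norm_num [half_rpow_neg_half]; positivity))]
        norm_num [half_rpow_three_halves, half_rpow_neg_half]
        ring_nf
    _ ≤ ENNReal.ofReal (20 * √2 / 3 * r) := by
        refine ENNReal.ofReal_le_ofReal ?_
        nlinarith [Real.sqrt_nonneg 2]

/-- For `r ≥ 1`, the kernel difference `(2t/(1−t²) − 2r·t^(2r−1)/(1−t^(2r)))·t^(−1/2)` is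
nonnegative on `(0, ∞) \ {1}` and its Lebesgue integral over `(0, ∞)` is at most `(20√2/3)·r`. -/
theorem kernel_integral_bound_L2 (r : ℝ) (hr : 1 ≤ r) :
    (∀ t ∈ Set.Ioi (0 : ℝ), t ≠ 1 →
      0 ≤ (2 * t / (1 - t ^ 2) - 2 * r * t ^ (2 * r - 1) / (1 - t ^ (2 * r))) * t ^ (-(1/2) : ℝ)) ∧
    ∫⁻ t in Set.Ioi (0 : ℝ),
        ENNReal.ofReal
          ((2 * t / (1 - t ^ 2) - 2 * r * t ^ (2 * r - 1) / (1 - t ^ (2 * r))) * t ^ (-(1/2) : ℝ))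
      ≤ ENNReal.ofReal (20 * Real.sqrt 2 / 3 * r) :=
  ⟨fun _ ht ht1 => mul_nonneg (kernelDiff_nonneg hr ht ht1) (Real.rpow_nonneg (le_of_lt ht) _),
    lintegral_ofReal_kernelDiff_mul_le hr⟩
end

section
/- For every real r ≥ 1, the function t ↦ (2r·t/(1 − t^(2r)) − 2t/(1 − t²))·t^(−1/2) is nonnegative on (0, ∞) \ {1}, and its Lebesgue integral over (0, ∞) satisfies ∫₀^∞ (2r·t/(1 − t^(2r)) − 2t/(1 − t²))·t^(−1/2) dt ≤ 4√2·r + 8√2/3. -/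
/-!
With `u = t²` the integrand is `2 √t · (r / (1 - u ^ r) - 1 / (1 - u))`. Writing the bracket over
the common denominator `(1 - u ^ r) (1 - u) > 0`, Bernoulli's inequality `u ^ r ≥ 1 + r (u - 1)`
makes it nonnegative, and `u ^ r (1 + r (1 - u)) ≤ 1` bounds it by `r`; for `u > 1` the first
fraction is negative, so the bracket is also at most `1 / (u - 1)`. Hence the integrand is at most
`2 √2 r` on `(0, 2]` and at most `(8/3) t ^ (-3/2)` on `(2, ∞)`, whose integrals are `4 √2 r` and
`8 √2 / 3`.
-/

open MeasureTheory Real Set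

theorem rpow_mul_one_add_mul_one_sub_le_one {u r : ℝ} (hu : 0 < u) (hr : 0 ≤ r) :
    u ^ r * (1 + r * (1 - u)) ≤ 1 := by
  rcases le_or_gt (1 + r * (1 - u)) 0 with h | h
  · exact (mul_nonpos_of_nonneg_of_nonpos (rpow_nonneg hu.le r) h).trans zero_le_one
  -- `u ^ r ≤ exp (r (u - 1))` because `log u ≤ u - 1`, and `1 + x ≤ exp x`.
  calc u ^ r * (1 + r * (1 - u)) ≤ exp (r * (u - 1)) * exp (r * (1 - u)) := by
        gcongr
        · rw [rpow_def_of_pos hu, mul_comm]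
          exact exp_le_exp.2 (mul_le_mul_of_nonneg_left (log_le_sub_one_of_pos hu) hr)
        · linarith [add_one_le_exp (r * (1 - u))]
    _ = 1 := by rw [← exp_add, ← exp_zero]; ring_nf

theorem one_sub_rpow_mul_one_sub_pos {u r : ℝ} (hu : 0 < u) (hu1 : u ≠ 1) (hr : 0 < r) :
    0 < (1 - u ^ r) * (1 - u) := by
  rcases hu1.lt_or_gt with h | h
  · exact mul_pos (sub_pos.2 (rpow_lt_one hu.le h hr)) (sub_pos.2 h)
  · exact mul_pos_of_neg_of_neg (sub_neg.2 (one_lt_rpow h hr)) (sub_neg.2 h)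

/-- At `u = 1` both fractions are `x / 0 = 0`, so `kernelGap r 1 = 0`. -/
noncomputable def kernelGap (r u : ℝ) : ℝ := r / (1 - u ^ r) - 1 / (1 - u)

theorem kernelGap_eq_div {u r : ℝ} (hu : 0 < u) (hu1 : u ≠ 1) (hr : 0 < r) :
    kernelGap r u = (u ^ r - 1 - r * (u - 1)) / ((1 - u ^ r) * (1 - u)) := by
  have hden := one_sub_rpow_mul_one_sub_pos hu hu1 hr
  rw [kernelGap, div_sub_div _ _ (left_ne_zero_of_mul hden.ne') (right_ne_zero_of_mul hden.ne')]
  ring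

theorem kernelGap_nonneg {u r : ℝ} (hu : 0 < u) (hr : 1 ≤ r) : 0 ≤ kernelGap r u := by
  rcases eq_or_ne u 1 with rfl | hu1
  · simp [kernelGap]
  rw [kernelGap_eq_div hu hu1 (by linarith)]
  have bernoulli := one_add_mul_self_le_rpow_one_add (s := u - 1) (by linarith) hr
  rw [add_sub_cancel] at bernoulli
  exact div_nonneg (by linarith) (one_sub_rpow_mul_one_sub_pos hu hu1 (by linarith)).le

theorem kernelGap_le {u r : ℝ} (hu : 0 < u) (hr : 0 < r) : kernelGap r u ≤ r := by
  rcases eq_or_ne u 1 with rfl | hu1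
  · simpa [kernelGap] using hr.le
  rw [kernelGap_eq_div hu hu1 hr, div_le_iff₀ (one_sub_rpow_mul_one_sub_pos hu hu1 hr)]
  linear_combination rpow_mul_one_add_mul_one_sub_le_one hu hr.le

theorem kernelGap_le_inv_sub_one {u r : ℝ} (hu : 1 < u) (hr : 0 < r) :
    kernelGap r u ≤ (u - 1)⁻¹ := by
  have : r / (1 - u ^ r) ≤ 0 :=
    div_nonpos_of_nonneg_of_nonpos hr.le (by linarith [one_lt_rpow hu hr])
  rw [kernelGap, one_div, ← neg_sub u 1, inv_neg]
  linarith

theorem kernel_eq_kernelGap {r t : ℝ} (ht : 0 ≤ t) :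
    2 * r * t / (1 - t ^ (2 * r)) - 2 * t / (1 - t ^ 2) = 2 * t * kernelGap r (t ^ 2) := by
  rw [kernelGap, rpow_mul ht, rpow_two]
  ring

theorem mul_rpow_neg_half {t : ℝ} (ht : 0 < t) : t * t ^ (-(1/2) : ℝ) = √t := by
  rw [rpow_neg ht.le, ← sqrt_eq_rpow, mul_inv_eq_iff_eq_mul₀ (by positivity), mul_self_sqrt ht.le]

theorem sqrt_div_sq {t : ℝ} (ht : 0 < t) : √t / t ^ 2 = t ^ (-(3/2) : ℝ) := by
  rw [sqrt_eq_rpow, ← rpow_two, ← rpow_sub ht]; norm_num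

theorem lintegral_Ioi_rpow_of_lt {a c : ℝ} (ha : a < -1) (hc : 0 < c) :
    ∫⁻ t in Ioi c, ENNReal.ofReal (t ^ a) = ENNReal.ofReal (-c ^ (a + 1) / (a + 1)) := by
  rw [← ofReal_integral_eq_lintegral_ofReal (integrableOn_Ioi_rpow_of_lt ha hc),
    integral_Ioi_rpow_of_lt ha hc]
  filter_upwards [ae_restrict_mem measurableSet_Ioi] with t ht
  exact rpow_nonneg (hc.trans ht).le a

theorem kernel_mul_rpow_neg_half_eq {r t : ℝ} (ht : 0 < t) :
    (2 * r * t / (1 - t ^ (2 * r)) - 2 * t / (1 - t ^ 2)) * t ^ (-(1/2) : ℝ) =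
      2 * kernelGap r (t ^ 2) * √t := by
  rw [kernel_eq_kernelGap ht.le, ← mul_rpow_neg_half ht]
  ring

theorem kernelGap_mul_sqrt_le {r t : ℝ} (hr : 0 < r) (ht : 0 < t) (ht2 : t ≤ 2) :
    2 * kernelGap r (t ^ 2) * √t ≤ 2 * √2 * r := by
  have := kernelGap_le (pow_pos ht 2) hr
  calc 2 * kernelGap r (t ^ 2) * √t ≤ 2 * r * √2 := by gcongr
    _ = 2 * √2 * r := by ring

theorem kernelGap_mul_sqrt_le_rpow {r t : ℝ} (hr : 0 < r) (ht : 2 < t) :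
    2 * kernelGap r (t ^ 2) * √t ≤ 8 / 3 * t ^ (-(3/2) : ℝ) := by
  have ht0 : 0 < t := by linarith
  have hgap : kernelGap r (t ^ 2) ≤ 4 / 3 / t ^ 2 := by
    refine (kernelGap_le_inv_sub_one (by nlinarith) hr).trans ?_
    rw [inv_le_iff_one_le_mul₀ (by nlinarith), div_mul_eq_mul_div, le_div_iff₀ (by positivity)]
    nlinarith
  calc 2 * kernelGap r (t ^ 2) * √t ≤ 2 * (4 / 3 / t ^ 2) * √t := by gcongr
    _ = 8 / 3 * (√t / t ^ 2) := by ring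
    _ = 8 / 3 * t ^ (-(3/2) : ℝ) := by rw [sqrt_div_sq ht0]

theorem lintegral_Ioi_two_rpow_neg_three_halves :
    ∫⁻ t in Ioi 2, ENNReal.ofReal (8 / 3 * t ^ (-(3/2) : ℝ)) = ENNReal.ofReal (8 * √2 / 3) := by
  simp_rw [ENNReal.ofReal_mul (by norm_num : (0:ℝ) ≤ 8 / 3)]
  rw [lintegral_const_mul' _ _ ENNReal.ofReal_ne_top,
    lintegral_Ioi_rpow_of_lt (by norm_num) two_pos, ← ENNReal.ofReal_mul (by norm_num)]
  congr 1
  rw [show (-(3/2) : ℝ) + 1 = -(1/2) by norm_num, rpow_neg zero_le_two, ← sqrt_eq_rpow]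
  field_simp
  norm_num

/-- For `r ≥ 1`, the kernel difference `(2r·t/(1−t^(2r)) − 2t/(1−t²))·t^(−1/2)` is
nonnegative on `(0, ∞) \ {1}` and its Lebesgue integral over `(0, ∞)` is at most
`4√2·r + 8√2/3`. -/
theorem kernel_integral_bound_second_deriv (r : ℝ) (hr : 1 ≤ r) :
    (∀ t ∈ Set.Ioi (0 : ℝ), t ≠ 1 →
      0 ≤ (2 * r * t / (1 - t ^ (2 * r)) - 2 * t / (1 - t ^ 2)) * t ^ (-(1/2) : ℝ)) ∧
    ∫⁻ t in Set.Ioi (0 : ℝ),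
        ENNReal.ofReal
          ((2 * r * t / (1 - t ^ (2 * r)) - 2 * t / (1 - t ^ 2)) * t ^ (-(1/2) : ℝ))
      ≤ ENNReal.ofReal (4 * Real.sqrt 2 * r + 8 * Real.sqrt 2 / 3) := by
  have hr0 : 0 < r := by linarith
  refine ⟨fun t (ht : 0 < t) _ => ?_, ?_⟩
  · have := kernelGap_nonneg (pow_pos ht 2) hr
    rw [kernel_mul_rpow_neg_half_eq ht]
    positivity
  rw [← Ioc_union_Ioi_eq_Ioi zero_le_two, lintegral_union measurableSet_Ioi Ioc_disjoint_Ioi_same,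
    ENNReal.ofReal_add (by positivity) (by positivity)]
  gcongr
  · calc _ ≤ ∫⁻ _ in Ioc (0 : ℝ) 2, ENNReal.ofReal (2 * √2 * r) := by
          refine setLIntegral_mono' measurableSet_Ioc fun t ⟨ht0, ht2⟩ => ?_
          rw [kernel_mul_rpow_neg_half_eq ht0]
          exact ENNReal.ofReal_le_ofReal (kernelGap_mul_sqrt_le hr0 ht0 ht2)
      _ = ENNReal.ofReal (4 * √2 * r) := by
          rw [setLIntegral_const, Real.volume_Ioc, ← ENNReal.ofReal_mul (by positivity)]
          ring_nf
  · rw [← lintegral_Ioi_two_rpow_neg_three_halves]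
    refine setLIntegral_mono' measurableSet_Ioi fun t (ht : 2 < t) => ?_
    rw [kernel_mul_rpow_neg_half_eq (by linarith)]
    exact ENNReal.ofReal_le_ofReal (kernelGap_mul_sqrt_le_rpow hr0 ht)
end

section
/- Let α ∈ (0, 1), and set s = sin(απ/2), c = cos(απ/2), D(x) = x² + 2cx + 1. Then D(x) > 0 for all real x, and the function W(x) = −2sx/D(x) is differentiable with W'(x) = −2s(1 − x²)/D(x)², and it satisfies for every real x the identity x·W'(x) + (1 − 2(cx + 1)/D(x))·W(x) = 0. -/
open Real

/-! `D(x) = (x + c)² + (1 - c²)` is positive because `c = cos(απ/2)` has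
`c² = 1 - sin²(απ/2) < 1`, and `sin(απ/2) ≠ 0` for `α ∈ (0, 1)`. Once `D ≠ 0`, both the
derivative and the steady-state identity are rational identities checked by clearing `D`. -/

theorem cos_sq_lt_one_of_sin_ne_zero {θ : ℝ} (h : sin θ ≠ 0) : cos θ ^ 2 < 1 := by
  nlinarith [sin_sq_add_cos_sq θ, pow_pos (abs_pos.mpr h) 2, sq_abs (sin θ)]

theorem sin_half_pi_mul_ne_zero {α : ℝ} (hα : α ∈ Set.Ioo (0 : ℝ) 1) : sin (α * π / 2) ≠ 0 :=
  (sin_pos_of_pos_of_lt_pi (by nlinarith [hα.1, pi_pos]) (by nlinarith [hα.2, pi_pos])).ne'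

theorem quadratic_pos_of_sq_lt_one {c : ℝ} (hc : c ^ 2 < 1) (x : ℝ) :
    0 < x ^ 2 + 2 * c * x + 1 := by
  nlinarith [sq_nonneg (x + c)]

theorem hasDerivAt_mul_div_quadratic (s c x : ℝ) (hD : x ^ 2 + 2 * c * x + 1 ≠ 0) :
    HasDerivAt (fun x : ℝ => s * x / (x ^ 2 + 2 * c * x + 1))
      (s * (1 - x ^ 2) / (x ^ 2 + 2 * c * x + 1) ^ 2) x := by
  have hnum : HasDerivAt (fun x : ℝ => s * x) s x := by
    simpa using (hasDerivAt_id x).const_mul s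
  have hden : HasDerivAt (fun x : ℝ => x ^ 2 + 2 * c * x + 1) (2 * x + 2 * c) x := by
    simpa [mul_comm] using
      ((hasDerivAt_pow 2 x).add ((hasDerivAt_id x).const_mul (2 * c))).add_const 1
  exact (hnum.div hden hD).congr_deriv (by ring)

theorem steady_state_identity (s c x : ℝ) (hD : x ^ 2 + 2 * c * x + 1 ≠ 0) :
    x * (-2 * s * (1 - x ^ 2) / (x ^ 2 + 2 * c * x + 1) ^ 2) +
      (1 - 2 * (c * x + 1) / (x ^ 2 + 2 * c * x + 1)) * (-2 * s * x / (x ^ 2 + 2 * c * x + 1))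
      = 0 := by
  -- with `D` atomic, `field_simp` clears `D` and `D ^ 2` as powers of one factor
  generalize hD' : x ^ 2 + 2 * c * x + 1 = D at hD ⊢
  field_simp
  rw [← hD']
  ring

/-- The explicit self-similar profile at `a = 0`: for `α ∈ (0,1)`, with `s = sin(απ/2)`,
`c = cos(απ/2)`, `D(x) = x² + 2cx + 1`, one has `D > 0` everywhere, the profile
`W(x) = −2sx/D(x)` has derivative `W'(x) = −2s(1 − x²)/D(x)²`, and the steady-state identity
`x·W'(x) + (1 − 2(cx + 1)/D(x))·W(x) = 0` holds for all real `x`. -/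
theorem explicit_profile_steady_state (α : ℝ) (hα : α ∈ Set.Ioo (0 : ℝ) 1) :
    (∀ x : ℝ, 0 < x ^ 2 + 2 * cos (α * π / 2) * x + 1) ∧
    (∀ x : ℝ,
      HasDerivAt (fun x : ℝ => -2 * sin (α * π / 2) * x / (x ^ 2 + 2 * cos (α * π / 2) * x + 1))
        (-2 * sin (α * π / 2) * (1 - x ^ 2) / (x ^ 2 + 2 * cos (α * π / 2) * x + 1) ^ 2) x) ∧
    (∀ x : ℝ,
      x * (-2 * sin (α * π / 2) * (1 - x ^ 2) / (x ^ 2 + 2 * cos (α * π / 2) * x + 1) ^ 2) +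
        (1 - 2 * (cos (α * π / 2) * x + 1) / (x ^ 2 + 2 * cos (α * π / 2) * x + 1)) *
          (-2 * sin (α * π / 2) * x / (x ^ 2 + 2 * cos (α * π / 2) * x + 1)) = 0) := by
  have hD := quadratic_pos_of_sq_lt_one
    (cos_sq_lt_one_of_sin_ne_zero (sin_half_pi_mul_ne_zero hα))
  exact ⟨hD, fun x => hasDerivAt_mul_div_quadratic _ _ x (hD x).ne',
    fun x => steady_state_identity _ _ x (hD x).ne'⟩
end
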